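/- arXiv:2004.12541 — 2 statements merged into one kernel-verified Lean document; each statement's English description precedes it below -/
import Mathlib

section
/- Let δ, μ, ε > 0, a = εβ₁f₁(S₀)g₁'(0) ≥ 0, b = β₂f₂(S₀)g₂'(0) ≥ 0, and define R₀ = a/((μ+ε)(μ+δ)) + b/(μ+ε). Let s₅, s₆ be the two (real) roots of H₁(s) = s² + (δ+2μ+ε−b)s + (μ+δ)(μ+ε)(1−R₀). If R₀ < 1, then s₅ < 0 and s₆ < 0. -/
theorem sum_eq_neg_and_mul_eq_of_monic_quadratic_eq {p q x y : ℝ}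
    (h : ∀ s : ℝ, s ^ 2 + p * s + q = (s - x) * (s - y)) :
    x + y = -p ∧ x * y = q := by
  have h₀ := h 0
  have h₁ := h 1
  constructor <;> linarith

theorem neg_and_neg_of_add_neg_of_mul_pos {x y : ℝ} (hsum : x + y < 0) (hprod : 0 < x * y) :
    x < 0 ∧ y < 0 := by
  rcases mul_pos_iff.mp hprod with ⟨hx, hy⟩ | hneg
  · linarith
  · exact hneg

theorem lt_of_nonneg_add_div_lt_one {x b c : ℝ} (hc : 0 < c) (hx : 0 ≤ x)
    (h : x + b / c < 1) : b < c := by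
  have : b / c < 1 := by linarith
  rwa [div_lt_one hc] at this

theorem stmt_6_general (δ μ ε a b : ℝ)
    (hδ : 0 < δ) (hμ : 0 < μ) (hε : 0 < ε) (ha : 0 ≤ a)
    (R₀ : ℝ) (hR₀ : R₀ = a / ((μ + ε) * (μ + δ)) + b / (μ + ε))
    (s₅ s₆ : ℝ)
    (hroots : ∀ s : ℝ,
      s ^ 2 + (δ + 2 * μ + ε - b) * s + (μ + δ) * (μ + ε) * (1 - R₀)
        = (s - s₅) * (s - s₆))
    (hR : R₀ < 1) :
    s₅ < 0 ∧ s₆ < 0 := by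
  obtain ⟨hsum, hprod⟩ := sum_eq_neg_and_mul_eq_of_monic_quadratic_eq hroots
  have hb : b < μ + ε :=
    lt_of_nonneg_add_div_lt_one (by positivity) (by positivity) (hR₀ ▸ hR)
  refine neg_and_neg_of_add_neg_of_mul_pos (by linarith) ?_
  rw [hprod]
  have : 0 < 1 - R₀ := by linarith
  positivity

theorem stmt_6 (δ μ ε a b : ℝ)
    (hδ : 0 < δ) (hμ : 0 < μ) (hε : 0 < ε) (ha : 0 ≤ a) (hb : 0 ≤ b)
    (R₀ : ℝ) (hR₀ : R₀ = a / ((μ + ε) * (μ + δ)) + b / (μ + ε))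
    (s₅ s₆ : ℝ)
    (hroots : ∀ s : ℝ,
      s ^ 2 + (δ + 2 * μ + ε - b) * s + (μ + δ) * (μ + ε) * (1 - R₀)
        = (s - s₅) * (s - s₆))
    (hR : R₀ < 1) :
    s₅ < 0 ∧ s₆ < 0 :=
  stmt_6_general δ μ ε a b hδ hμ hε ha R₀ hR₀ s₅ s₆ hroots hR
end

section
/- Let s₄, m, n ∈ ℝ with n ≠ 0, and set a₁ = −s₄ − 2m, a₂ = 2s₄m + m² + n², a₃ = −s₄(m² + n²). If a₁ > 0, a₂ > 0, a₃ > 0, and m > 0, then n² > 3m², i.e. the complex roots m ± ni satisfy |arg(m ± ni)| > π/3. -/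
/-
Positivity of `a₁ = -s₄ - 2m` gives `-s₄ m > 2m²` when `m > 0`, and positivity of `a₂` then gives
`m² + n² > -2 s₄ m > 4m²`, i.e. `n² > 3m²`. For `z = m ± n i` this says `re z < ‖z‖ / 2 = ‖z‖ cos (π/3)`,
and since cosine decreases on `[0, π]` the angle `|arg z|` must exceed `π/3`.
-/

open Complex

theorem Complex.lt_abs_arg_of_re_lt_norm_mul_cos {z : ℂ} {θ : ℝ} (hθπ : θ ≤ Real.pi)
    (h : z.re < ‖z‖ * Real.cos θ) : θ < |arg z| := by
  by_contra! habs
  have hcos : Real.cos θ ≤ Real.cos (arg z) := by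
    rw [← Real.cos_abs (arg z)]
    exact Real.cos_le_cos_of_nonneg_of_le_pi (abs_nonneg _) hθπ habs
  have := mul_le_mul_of_nonneg_left hcos (norm_nonneg z)
  rw [norm_mul_cos_arg] at this
  linarith

theorem Complex.pi_div_three_lt_abs_arg_of_three_mul_sq_lt {x y : ℝ} (h : 3 * x ^ 2 < y ^ 2) :
    Real.pi / 3 < |arg (x + y * I)| := by
  refine lt_abs_arg_of_re_lt_norm_mul_cos (by linarith [Real.pi_pos]) ?_
  rw [Real.cos_pi_div_three, norm_add_mul_I, add_re, ofReal_re, re_ofReal_mul, I_re, mul_zero,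
    add_zero]
  have : 2 * x < √(x ^ 2 + y ^ 2) := Real.lt_sqrt_of_sq_lt (by linarith)
  linarith

theorem three_mul_sq_lt_sq_of_coeff_pos {s m n : ℝ} (hm : 0 < m) (h₁ : 0 < -s - 2 * m)
    (h₂ : 0 < 2 * s * m + m ^ 2 + n ^ 2) : 3 * m ^ 2 < n ^ 2 := by
  nlinarith [mul_pos h₁ hm]

theorem stmt_10_general (s₄ m n a₁ a₂ : ℝ)
    (ha₁ : a₁ = -s₄ - 2 * m) (ha₂ : a₂ = 2 * s₄ * m + m ^ 2 + n ^ 2)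
    (ha₁pos : 0 < a₁) (ha₂pos : 0 < a₂) (hm : 0 < m) :
    n ^ 2 > 3 * m ^ 2 ∧
      |Complex.arg ((m : ℂ) + (n : ℂ) * Complex.I)| > Real.pi / 3 ∧
      |Complex.arg ((m : ℂ) - (n : ℂ) * Complex.I)| > Real.pi / 3 := by
  subst ha₁ ha₂
  have key : 3 * m ^ 2 < n ^ 2 := three_mul_sq_lt_sq_of_coeff_pos hm ha₁pos ha₂pos
  have hconj : (m : ℂ) - n * I = m + ((-n : ℝ) : ℂ) * I := by push_cast; ring
  refine ⟨key, pi_div_three_lt_abs_arg_of_three_mul_sq_lt key, ?_⟩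
  rw [hconj]
  exact pi_div_three_lt_abs_arg_of_three_mul_sq_lt (by rwa [neg_sq])

theorem stmt_10 (s₄ m n a₁ a₂ a₃ : ℝ) (hn : n ≠ 0)
    (ha₁ : a₁ = -s₄ - 2 * m) (ha₂ : a₂ = 2 * s₄ * m + m ^ 2 + n ^ 2)
    (ha₃ : a₃ = -s₄ * (m ^ 2 + n ^ 2))
    (ha₁pos : 0 < a₁) (ha₂pos : 0 < a₂) (ha₃pos : 0 < a₃) (hm : 0 < m) :
    n ^ 2 > 3 * m ^ 2 ∧
      |Complex.arg ((m : ℂ) + (n : ℂ) * Complex.I)| > Real.pi / 3 ∧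
      |Complex.arg ((m : ℂ) - (n : ℂ) * Complex.I)| > Real.pi / 3 :=
  stmt_10_general s₄ m n a₁ a₂ ha₁ ha₂ ha₁pos ha₂pos hm
end
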